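/- Let t > 0 and F(x) = |x| + (x − t)²/(2t). Then the normalized mean satisfies lim_{T→0⁺} (1/√T) · (∫_ℝ x·exp(−F(x)/T) dx) / (∫_ℝ exp(−F(x)/T) dx) = √(2t/π), and the normalized second moment satisfies lim_{T→0⁺} (1/T) · (∫_ℝ x²·exp(−F(x)/T) dx) / (∫_ℝ exp(−F(x)/T) dx) = t. That is, for y = t the bias of X_T(t,t) is asymptotically √T·E[|N(0,t)|] = √(2Tt/π) and its mean square error is asymptotically T·t. -/

import Mathlib

/-!
Writing `F(x) = t/2 + x²/(2t) + (|x| - x)`, the weight `e^{t/(2T)} e^{-F/T}` is the Gaussian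
`e^{-x²/(2tT)}` on `x > 0` and is damped further by `e^{2x/T}` on `x ≤ 0`. So the `n`-th moment
is the half-Gaussian moment `(2tT)^{(n+1)/2} Γ((n+1)/2) / 2` up to an error of at most
`n! (T/2)^{n+1} = o(T^{(n+1)/2})`, and the limits are ratios of half-Gaussian moments.
-/

open Filter MeasureTheory
open Set Real Topology

/-- The one-dimensional objective `F(x) = |x| + (x − y)²/(2t)`. -/
noncomputable def obj1 (y t x : ℝ) : ℝ := |x| + (x - y) ^ 2 / (2 * t)

lemma integral_Ioi_pow_mul_exp_neg_mul (n : ℕ) {c : ℝ} (hc : 0 < c) :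
    ∫ x in Ioi 0, x ^ n * exp (-(c * x)) = n.factorial / c ^ (n + 1) := by
  have h := integral_rpow_mul_exp_neg_mul_Ioi (a := n + 1) (by positivity) hc
  simp only [add_sub_cancel_right, rpow_natCast, Gamma_nat_eq_factorial] at h
  rw [h, ← rpow_natCast, one_div, inv_rpow hc.le]
  push_cast
  ring

lemma integrableOn_Ioi_pow_mul_exp_neg_mul (n : ℕ) {c : ℝ} (hc : 0 < c) :
    IntegrableOn (fun x => x ^ n * exp (-(c * x))) (Ioi 0) :=
  Integrable.of_integral_ne_zero <| by
    rw [integral_Ioi_pow_mul_exp_neg_mul n hc]; have := n.factorial_pos; positivity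

lemma integral_Ioi_pow_mul_exp_neg_mul_sq (n : ℕ) {b : ℝ} (hb : 0 < b) :
    ∫ x in Ioi 0, x ^ n * exp (-b * x ^ 2) = Gamma ((n + 1) / 2) / (2 * √b ^ (n + 1)) := by
  have h := integral_rpow_mul_exp_neg_mul_rpow two_pos (neg_one_lt_zero.trans_le n.cast_nonneg) hb
  simp only [rpow_natCast, rpow_two] at h
  rw [h, sqrt_eq_rpow, ← rpow_natCast, ← rpow_mul hb.le, neg_div, rpow_neg hb.le]
  push_cast
  field_simp

section
variable (n : ℕ) {b c : ℝ}

lemma integrable_pow_mul_exp_neg_mul_sq_add (hb : 0 < b) (hc : 0 ≤ c) :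
    Integrable fun x => x ^ n * exp (-(b * x ^ 2 + c * (|x| - x))) := by
  have hg := integrable_rpow_mul_exp_neg_mul_sq hb (s := n) (neg_one_lt_zero.trans_le n.cast_nonneg)
  simp only [rpow_natCast] at hg
  refine hg.mono (by fun_prop) (ae_of_all _ fun x => ?_)
  have : 0 ≤ c * (|x| - x) := mul_nonneg hc (sub_nonneg.2 (le_abs_self x))
  simp only [norm_mul, norm_eq_abs, abs_exp]
  gcongr
  linarith

lemma abs_setIntegral_Iic_pow_mul_exp_neg_le (hb : 0 ≤ b) (hc : 0 < c) :
    |∫ x in Iic 0, x ^ n * exp (-(b * x ^ 2 + c * (|x| - x)))| ≤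
      n.factorial / (2 * c) ^ (n + 1) := by
  rw [← neg_zero, ← integral_comp_neg_Ioi, ← norm_eq_abs,
    ← integral_Ioi_pow_mul_exp_neg_mul n (by positivity : 0 < 2 * c)]
  refine norm_integral_le_of_norm_le (integrableOn_Ioi_pow_mul_exp_neg_mul n (by positivity))
    ((ae_restrict_mem measurableSet_Ioi).mono fun x (hx : 0 < x) => ?_)
  rw [norm_mul, norm_pow, norm_neg, norm_of_nonneg hx.le, norm_of_nonneg (exp_pos _).le,
    abs_neg, abs_of_pos hx]
  gcongr
  nlinarith [mul_nonneg hb (sq_nonneg x)]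

lemma abs_integral_pow_mul_exp_neg_sub_le (hb : 0 < b) (hc : 0 < c) :
    |(∫ x, x ^ n * exp (-(b * x ^ 2 + c * (|x| - x)))) -
        Gamma ((n + 1) / 2) / (2 * √b ^ (n + 1))| ≤ n.factorial / (2 * c) ^ (n + 1) := by
  have hf := integrable_pow_mul_exp_neg_mul_sq_add n hb hc.le
  have hIoi : ∫ x in Ioi 0, x ^ n * exp (-(b * x ^ 2 + c * (|x| - x))) =
      Gamma ((n + 1) / 2) / (2 * √b ^ (n + 1)) := by
    rw [← integral_Ioi_pow_mul_exp_neg_mul_sq n hb]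
    refine setIntegral_congr_fun measurableSet_Ioi fun x (hx : 0 < x) => ?_
    simp [abs_of_pos hx]
  rw [← intervalIntegral.integral_Iic_add_Ioi hf.integrableOn hf.integrableOn, hIoi,
    add_sub_cancel_right]
  exact abs_setIntegral_Iic_pow_mul_exp_neg_le n hb.le hc
end

/-- `∫ x in Ioi 0, x ^ n * exp (-x ^ 2 / (2 * t))`, by `integral_Ioi_pow_mul_exp_neg_mul_sq`. -/
noncomputable def halfGaussianMoment (t : ℝ) (n : ℕ) : ℝ :=
  √(2 * t) ^ (n + 1) * Gamma ((n + 1) / 2) / 2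

lemma halfGaussianMoment_zero (t : ℝ) : halfGaussianMoment t 0 = √(2 * t) * √π / 2 := by
  rw [halfGaussianMoment, Nat.cast_zero, zero_add, zero_add, pow_one, Gamma_one_half_eq]

lemma halfGaussianMoment_one {t : ℝ} (ht : 0 ≤ t) : halfGaussianMoment t 1 = t := by
  rw [halfGaussianMoment, show ((1 : ℕ) + 1) / 2 = (1 : ℝ) by norm_num, Gamma_one,
    sq_sqrt (by positivity)]
  ring

lemma halfGaussianMoment_two {t : ℝ} (ht : 0 ≤ t) :
    halfGaussianMoment t 2 = t * (√(2 * t) * √π / 2) := by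
  have hGamma : Gamma (3 / 2) = √π / 2 := by
    rw [show (3 / 2 : ℝ) = 1 / 2 + 1 by norm_num, Gamma_add_one (by norm_num), Gamma_one_half_eq]
    ring
  rw [halfGaussianMoment, show ((2 : ℕ) + 1) / 2 = (3 / 2 : ℝ) by norm_num, hGamma, pow_succ,
    sq_sqrt (by positivity)]
  ring

lemma exp_neg_obj1_div {t T : ℝ} (ht : t ≠ 0) (hT : T ≠ 0) (x : ℝ) :
    exp (-obj1 t t x / T) =
      exp (-(t / (2 * T))) * exp (-((2 * t * T)⁻¹ * x ^ 2 + T⁻¹ * (|x| - x))) := by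
  rw [← exp_add]
  congr 1
  unfold obj1
  field_simp
  ring

noncomputable def normalizedMoment (t : ℝ) (n : ℕ) (T : ℝ) : ℝ :=
  exp (t / (2 * T)) * (∫ x, x ^ n * exp (-obj1 t t x / T)) / √T ^ (n + 1)

lemma abs_normalizedMoment_sub_le (n : ℕ) {t T : ℝ} (ht : 0 < t) (hT : 0 < T) :
    |normalizedMoment t n T - halfGaussianMoment t n|
      ≤ n.factorial / 2 ^ (n + 1) * √T ^ (n + 1) := by
  have h := abs_integral_pow_mul_exp_neg_sub_le n (b := (2 * t * T)⁻¹) (c := T⁻¹)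
    (by positivity) (by positivity)
  have hI : exp (t / (2 * T)) * ∫ x, x ^ n * exp (-obj1 t t x / T) =
      ∫ x, x ^ n * exp (-((2 * t * T)⁻¹ * x ^ 2 + T⁻¹ * (|x| - x))) := by
    rw [← integral_const_mul]
    refine integral_congr_ae (ae_of_all _ fun x => ?_)
    simp only [exp_neg_obj1_div ht.ne' hT.ne', exp_neg]
    field_simp
  have hs : 0 < √T ^ (n + 1) := pow_pos (sqrt_pos.2 hT) _
  have hGamma : Gamma ((n + 1) / 2) / (2 * √(2 * t * T)⁻¹ ^ (n + 1)) =
      halfGaussianMoment t n * √T ^ (n + 1) := by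
    rw [halfGaussianMoment, sqrt_inv, sqrt_mul (by positivity), inv_pow, mul_pow]
    field_simp
  have herror : (n.factorial : ℝ) / (2 * T⁻¹) ^ (n + 1) =
      n.factorial / 2 ^ (n + 1) * √T ^ (n + 1) * √T ^ (n + 1) := by
    rw [mul_assoc _ (√T ^ (n + 1)), ← mul_pow, mul_self_sqrt hT.le, mul_pow, inv_pow]
    field_simp
  rw [hGamma, herror, ← hI] at h
  calc _ = |exp (t / (2 * T)) * (∫ x, x ^ n * exp (-obj1 t t x / T)) -
        halfGaussianMoment t n * √T ^ (n + 1)| / √T ^ (n + 1) := by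
        rw [normalizedMoment, ← abs_of_pos hs, ← abs_div, abs_of_pos hs]
        congr 1
        field_simp
    _ ≤ n.factorial / 2 ^ (n + 1) * √T ^ (n + 1) * √T ^ (n + 1) / √T ^ (n + 1) := by gcongr
    _ = _ := by field_simp

lemma tendsto_normalizedMoment (n : ℕ) {t : ℝ} (ht : 0 < t) :
    Tendsto (normalizedMoment t n) (𝓝[>] 0) (𝓝 (halfGaussianMoment t n)) := by
  have hbound :
      Tendsto (fun T => n.factorial / 2 ^ (n + 1) * √T ^ (n + 1)) (𝓝[>] 0) (𝓝 0) := by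
    have := ((continuous_sqrt.pow (n + 1)).const_mul (n.factorial / 2 ^ (n + 1) : ℝ)).tendsto 0
    simpa using this.mono_left nhdsWithin_le_nhds
  refine tendsto_iff_norm_sub_tendsto_zero.2
    (squeeze_zero' (Eventually.of_forall fun _ => norm_nonneg _) ?_ hbound)
  filter_upwards [self_mem_nhdsWithin] with T (hT : 0 < T)
  exact abs_normalizedMoment_sub_le n ht hT

lemma moment_ratio_eq (k : ℕ) {t T : ℝ} (hT : 0 < T) :
    (∫ x, x ^ k * exp (-obj1 t t x / T)) / (∫ x, exp (-obj1 t t x / T)) =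
      √T ^ k * (normalizedMoment t k T / normalizedMoment t 0 T) := by
  have hs : √T ≠ 0 := (sqrt_pos.2 hT).ne'
  simp only [normalizedMoment, pow_zero, one_mul, zero_add, pow_one]
  rcases eq_or_ne (∫ x, exp (-obj1 t t x / T)) 0 with h0 | h0
  · simp [h0]
  · field_simp
    ring

/-- For `y = t`, the mean of `X_T(t,t)` is asymptotically `√T·√(2t/π)` and its second
moment is asymptotically `T·t`. -/
theorem stmt18 (t : ℝ) (ht : 0 < t) :
    Tendsto
      (fun T : ℝ =>
        1 / Real.sqrt T * ((∫ x : ℝ, x * Real.exp (-(obj1 t t x) / T)) /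
          ∫ x : ℝ, Real.exp (-(obj1 t t x) / T)))
      (nhdsWithin 0 (Set.Ioi 0))
      (nhds (Real.sqrt (2 * t / Real.pi))) ∧
    Tendsto
      (fun T : ℝ =>
        1 / T * ((∫ x : ℝ, x ^ 2 * Real.exp (-(obj1 t t x) / T)) /
          ∫ x : ℝ, Real.exp (-(obj1 t t x) / T)))
      (nhdsWithin 0 (Set.Ioi 0)) (nhds t) := by
  have hμ : 0 < √(2 * t) * √π / 2 := by
    have := sqrt_pos.2 pi_pos; have := sqrt_pos.2 (by positivity : 0 < 2 * t); positivity
  have hratio (k : ℕ) := (tendsto_normalizedMoment k ht).div (tendsto_normalizedMoment 0 ht)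
    (halfGaussianMoment_zero t ▸ hμ.ne')
  constructor
  · convert (hratio 1).congr' ?_ using 2
    · rw [halfGaussianMoment_one ht.le, halfGaussianMoment_zero, sqrt_div' _ pi_pos.le,
        eq_div_iff hμ.ne']
      field_simp
      rw [sq_sqrt (by positivity)]
    · filter_upwards [self_mem_nhdsWithin] with T (hT : 0 < T)
      have h := moment_ratio_eq 1 hT (t := t)
      simp only [pow_one] at h
      rw [h, Pi.div_apply]
      field_simp
  · convert (hratio 2).congr' ?_ using 2
    · rw [halfGaussianMoment_two ht.le, halfGaussianMoment_zero, mul_div_cancel_right₀ _ hμ.ne']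
    · filter_upwards [self_mem_nhdsWithin] with T (hT : 0 < T)
      rw [moment_ratio_eq 2 hT, sq_sqrt hT.le, Pi.div_apply]
      field_simp
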